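/- arXiv:2103.10589 — 2 statements merged into one kernel-verified Lean document; each statement's English description precedes it below -/
import Mathlib

section
/- Let n ≥ 3 be an integer, c ∈ ℝ with c ≠ 0, λ > 0 and x₀ ∈ ℝⁿ, and define v(x) = c (λ/(λ² + |x − x₀|²))^{(n−2)/2}. Then v attains equality in the sharp Sobolev inequality: (∫_{ℝⁿ} |v|^{2*} dx)^{2/2*} = S ∫_{ℝⁿ} |∇v|² dx. -/
/-!
After the translation `x ↦ x₀ + x` both integrals are radial, and polar coordinates reduce
them to `∫₀^∞ r^(2a-1) (λ² + r²)^(-(a+b)) dr = λ^(-2b) B(a, b) / 2`, which comes from the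
Euler beta integral through the substitutions `t = r²`, `t = λ² s` and `u = s / (1 + s)`.
With `X = π^(n/2) Γ(n/2) / Γ(n)` this gives `∫ |v|^{2*} = |c|^{2*} X` and
`∫ |∇v|² = c² n (n - 2) X`, while `S = X^(-2/n) / (n (n - 2))`; both sides of the Sobolev
inequality are therefore `c² X^(1 - 2/n)`.
-/

open MeasureTheory Real

/-- The sharp constant `S = (π n(n−2))⁻¹ (Γ(n)/Γ(n/2))^{2/n}` in the Sobolev
inequality on `ℝⁿ`. -/
noncomputable def sobolevS (n : ℕ) : ℝ :=
  (π * n * ((n : ℝ) - 2))⁻¹ * (Real.Gamma n / Real.Gamma ((n : ℝ) / 2)) ^ ((2 : ℝ) / n)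

open Set Module

theorem integral_Ioo_rpow_mul_one_sub_rpow {a b : ℝ} (ha : 0 < a) (hb : 0 < b) :
    ∫ u in Ioo (0 : ℝ) 1, u ^ (a - 1) * (1 - u) ^ (b - 1) =
      Gamma a * Gamma b / Gamma (a + b) := by
  have hbeta := Complex.betaIntegral_eq_Gamma_mul_div a b (by simpa) (by simpa)
  rw [Complex.betaIntegral, intervalIntegral.integral_of_le zero_le_one,
    ← Complex.ofReal_add, Complex.Gamma_ofReal,
    Complex.Gamma_ofReal, Complex.Gamma_ofReal] at hbeta
  apply Complex.ofReal_injective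
  rw [← integral_Ioc_eq_integral_Ioo, ← integral_complex_ofReal]
  push_cast
  rw [← hbeta]
  refine setIntegral_congr_fun measurableSet_Ioc fun u ⟨hu0, hu1⟩ => ?_
  rw [Complex.ofReal_cpow hu0.le, Complex.ofReal_cpow (by linarith)]
  push_cast
  rfl

theorem image_Ioi_div_one_add : (fun t : ℝ => t / (1 + t)) '' Ioi 0 = Ioo 0 1 := by
  ext u
  constructor
  · rintro ⟨t, ht : 0 < t, rfl⟩
    exact ⟨by positivity, (div_lt_one (by linarith)).2 (by linarith)⟩
  · rintro ⟨hu0, hu1⟩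
    refine ⟨u / (1 - u), div_pos hu0 (by linarith), ?_⟩
    field_simp
    ring

theorem integral_Ioi_rpow_mul_one_add_rpow_neg {a b : ℝ} (ha : 0 < a) (hb : 0 < b) :
    ∫ t in Ioi (0 : ℝ), t ^ (a - 1) * (1 + t) ^ (-(a + b)) =
      Gamma a * Gamma b / Gamma (a + b) := by
  have hderiv : ∀ t ∈ Ioi (0 : ℝ),
      HasDerivWithinAt (fun t => t / (1 + t)) (((1 + t) ^ 2)⁻¹) (Ioi 0) t := by
    intro t (ht : 0 < t)
    refine (((hasDerivAt_id' t).fun_div ((hasDerivAt_id' t).const_add 1)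
      (by linarith)).hasDerivWithinAt).congr_deriv ?_
    ring
  have hinj : InjOn (fun t : ℝ => t / (1 + t)) (Ioi 0) := by
    intro s (hs : 0 < s) t (ht : 0 < t) hst
    simp only at hst
    field_simp at hst
    linarith
  rw [← integral_Ioo_rpow_mul_one_sub_rpow ha hb, ← image_Ioi_div_one_add,
    integral_image_eq_integral_abs_deriv_smul measurableSet_Ioi hderiv hinj]
  refine setIntegral_congr_fun measurableSet_Ioi fun t (ht : 0 < t) => ?_
  have h1t : 0 < 1 + t := by linarith
  have hsub : 1 - t / (1 + t) = (1 + t)⁻¹ := by field_simp; ring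
  rw [smul_eq_mul, hsub, abs_of_pos (by positivity), div_rpow ht.le h1t.le,
    inv_rpow h1t.le, ← rpow_neg h1t.le, div_eq_mul_inv, ← rpow_neg h1t.le,
    ← rpow_two, ← rpow_neg h1t.le]
  rw [mul_assoc (t ^ _), ← rpow_add h1t, mul_left_comm, ← rpow_add h1t]
  congr 2
  ring

theorem integral_Ioi_rpow_mul_add_rpow_neg {a b μ : ℝ} (ha : 0 < a) (hb : 0 < b)
    (hμ : 0 < μ) :
    ∫ t in Ioi (0 : ℝ), t ^ (a - 1) * (μ + t) ^ (-(a + b)) =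
      μ ^ (-b) * (Gamma a * Gamma b / Gamma (a + b)) := by
  have hscale := integral_comp_mul_left_Ioi (fun t => t ^ (a - 1) * (μ + t) ^ (-(a + b))) 0 hμ
  rw [mul_zero, smul_eq_mul] at hscale
  have hpoint : ∀ t ∈ Ioi (0 : ℝ), (μ * t) ^ (a - 1) * (μ + μ * t) ^ (-(a + b)) =
      μ ^ (-b - 1) * (t ^ (a - 1) * (1 + t) ^ (-(a + b))) := by
    intro t (ht : 0 < t)
    rw [show μ + μ * t = μ * (1 + t) by ring, mul_rpow hμ.le ht.le,
      mul_rpow hμ.le (by linarith), show -b - 1 = (a - 1) + -(a + b) by ring, rpow_add hμ]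
    ring
  rw [setIntegral_congr_fun measurableSet_Ioi hpoint, integral_const_mul,
    integral_Ioi_rpow_mul_one_add_rpow_neg ha hb] at hscale
  rw [eq_inv_mul_iff_mul_eq₀ hμ.ne'] at hscale
  rw [← hscale, rpow_sub_one hμ.ne']
  field_simp

theorem integral_Ioi_rpow_mul_add_sq_rpow_neg {a b μ : ℝ} (ha : 0 < a) (hb : 0 < b)
    (hμ : 0 < μ) :
    ∫ r in Ioi (0 : ℝ), r ^ (2 * a - 1) * (μ + r ^ 2) ^ (-(a + b)) =
      μ ^ (-b) * (Gamma a * Gamma b / (2 * Gamma (a + b))) := by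
  have hsq := integral_comp_rpow_Ioi_of_pos (g := fun t => t ^ (a - 1) * (μ + t) ^ (-(a + b)))
    two_pos
  rw [integral_Ioi_rpow_mul_add_rpow_neg ha hb hμ] at hsq
  have hpoint : ∀ r ∈ Ioi (0 : ℝ), (2 * r ^ ((2 : ℝ) - 1)) •
      ((r ^ (2 : ℝ)) ^ (a - 1) * (μ + r ^ (2 : ℝ)) ^ (-(a + b))) =
      2 * (r ^ (2 * a - 1) * (μ + r ^ 2) ^ (-(a + b))) := by
    intro r (hr : 0 < r)
    rw [smul_eq_mul, ← rpow_mul hr.le, rpow_two,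
      show (2 : ℝ) * a - 1 = (2 - 1) + 2 * (a - 1) by ring, rpow_add hr]
    ring
  rw [setIntegral_congr_fun measurableSet_Ioi hpoint, integral_const_mul] at hsq
  linear_combination hsq / 2

section Radial

variable {E : Type*} [NormedAddCommGroup E] [InnerProductSpace ℝ E] [FiniteDimensional ℝ E]
  [MeasurableSpace E] [BorelSpace E] [Nontrivial E]

theorem measureReal_ball_zero_one :
    volume.real (Metric.ball (0 : E) 1) =
      π ^ ((finrank ℝ E : ℝ) / 2) / Gamma ((finrank ℝ E : ℝ) / 2 + 1) := by
  rw [measureReal_def, InnerProductSpace.volume_ball, ENNReal.ofReal_one, one_pow, one_mul,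
    ENNReal.toReal_ofReal (by positivity), sqrt_eq_rpow, ← rpow_natCast, ← rpow_mul pi_pos.le]
  ring_nf

theorem integral_norm_pow_mul_add_norm_sq_rpow_neg (k : ℕ) {b μ : ℝ} (hμ : 0 < μ)
    (hb : ((finrank ℝ E : ℝ) + k) / 2 < b) :
    ∫ x : E, ‖x‖ ^ k * (μ + ‖x‖ ^ 2) ^ (-b) =
      π ^ ((finrank ℝ E : ℝ) / 2) * μ ^ (((finrank ℝ E : ℝ) + k) / 2 - b) *
        (Gamma (((finrank ℝ E : ℝ) + k) / 2) * Gamma (b - ((finrank ℝ E : ℝ) + k) / 2)) /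
        (Gamma ((finrank ℝ E : ℝ) / 2) * Gamma b) := by
  set d := finrank ℝ E with hd
  have hd0 : 0 < d := finrank_pos
  set a : ℝ := ((d : ℝ) + k) / 2 with ha
  have ha0 : 0 < a := by positivity
  have hradial : ∫ r in Ioi (0 : ℝ), r ^ (d - 1) • (r ^ k * (μ + r ^ 2) ^ (-b)) =
      ∫ r in Ioi (0 : ℝ), r ^ (2 * a - 1) * (μ + r ^ 2) ^ (-(a + (b - a))) := by
    refine setIntegral_congr_fun measurableSet_Ioi fun r (hr : 0 < r) => ?_
    have hexp : 2 * a - 1 = ((d - 1 + k : ℕ) : ℝ) := by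
      rw [ha, Nat.cast_add, Nat.cast_sub hd0]
      push_cast
      ring
    rw [smul_eq_mul, add_sub_cancel, hexp, rpow_natCast, pow_add, mul_assoc]
  have hhalf : Gamma ((d : ℝ) / 2 + 1) = (d : ℝ) / 2 * Gamma ((d : ℝ) / 2) :=
    Gamma_add_one (by positivity)
  rw [integral_fun_norm_addHaar (μ := volume) (fun r => r ^ k * (μ + r ^ 2) ^ (-b)), hradial,
    integral_Ioi_rpow_mul_add_sq_rpow_neg ha0 (by linarith) hμ, add_sub_cancel,
    measureReal_ball_zero_one, hhalf, ← hd, neg_sub, nsmul_eq_mul, smul_eq_mul]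
  have : Gamma ((d : ℝ) / 2) ≠ 0 := (Gamma_pos_of_pos (by positivity)).ne'
  field_simp

end Radial

theorem hasGradientAt_const_mul_add_norm_sub_sq_rpow {E : Type*} [NormedAddCommGroup E]
    [InnerProductSpace ℝ E] [CompleteSpace E] (a μ p : ℝ) (x₀ x : E)
    (h : μ + ‖x - x₀‖ ^ 2 ≠ 0) :
    HasGradientAt (fun y => a * (μ + ‖y - x₀‖ ^ 2) ^ p)
      ((2 * a * p * (μ + ‖x - x₀‖ ^ 2) ^ (p - 1)) • (x - x₀)) x := by
  have hfderiv := ((((hasFDerivAt_id x).sub_const x₀).norm_sq.const_add μ).rpow_const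
    (p := p) (Or.inl h)).const_mul a
  refine hasGradientAt_iff_hasFDerivAt.mpr (hfderiv.congr_fderiv ?_)
  ext y
  simp only [id_eq, map_sub, ContinuousLinearMap.comp_id, smul_apply, sub_apply,
    coe_innerSL_apply, nsmul_eq_mul, Nat.cast_ofNat, smul_eq_mul, map_smul,
    InnerProductSpace.toDual_apply_apply]
  ring

section Bubble

variable {E : Type*} [NormedAddCommGroup E]

noncomputable def talentiBubble (n : ℕ) (c lam : ℝ) (x₀ x : E) : ℝ :=
  c * (lam / (lam ^ 2 + ‖x - x₀‖ ^ 2)) ^ (((n : ℝ) - 2) / 2)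

variable {n : ℕ} {c lam : ℝ} (x₀ : E)

theorem talentiBubble_eq (hlam : 0 < lam) :
    talentiBubble n c lam x₀ =
      fun x => c * lam ^ (((n : ℝ) - 2) / 2) *
        (lam ^ 2 + ‖x - x₀‖ ^ 2) ^ (-(((n : ℝ) - 2) / 2)) := by
  ext x
  rw [talentiBubble, div_rpow hlam.le (by positivity), rpow_neg (by positivity), div_eq_mul_inv,
    mul_assoc]

theorem abs_talentiBubble_rpow (hn : 2 < n) (hlam : 0 < lam) (x : E) :
    |talentiBubble n c lam x₀ x| ^ (2 * (n : ℝ) / ((n : ℝ) - 2)) =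
      |c| ^ (2 * (n : ℝ) / ((n : ℝ) - 2)) * lam ^ (n : ℝ) *
        (lam ^ 2 + ‖x - x₀‖ ^ 2) ^ (-(n : ℝ)) := by
  have hn' : (2 : ℝ) < n := by exact_mod_cast hn
  have hw : 0 < lam ^ 2 + ‖x - x₀‖ ^ 2 := by positivity
  rw [talentiBubble_eq x₀ hlam, abs_mul, abs_mul, abs_of_pos (rpow_pos_of_pos hlam _),
    abs_of_pos (rpow_pos_of_pos hw _), mul_rpow (by positivity) (by positivity),
    mul_rpow (abs_nonneg c) (by positivity), ← rpow_mul hlam.le, ← rpow_mul hw.le]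
  have hexp : ((n : ℝ) - 2) / 2 * (2 * n / (n - 2)) = n := by
    field_simp [(by linarith : (n : ℝ) - 2 ≠ 0)]
  rw [neg_mul, hexp, mul_assoc]

variable [InnerProductSpace ℝ E]

theorem norm_gradient_talentiBubble_sq [CompleteSpace E] (hlam : 0 < lam) (x : E) :
    ‖gradient (talentiBubble n c lam x₀) x‖ ^ 2 =
      c ^ 2 * ((n : ℝ) - 2) ^ 2 * lam ^ ((n : ℝ) - 2) *
        (‖x - x₀‖ ^ 2 * (lam ^ 2 + ‖x - x₀‖ ^ 2) ^ (-(n : ℝ))) := by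
  set p : ℝ := ((n : ℝ) - 2) / 2
  have hw : 0 < lam ^ 2 + ‖x - x₀‖ ^ 2 := by positivity
  rw [talentiBubble_eq x₀ hlam, (hasGradientAt_const_mul_add_norm_sub_sq_rpow _ _ _ x₀ x
    hw.ne').gradient, norm_smul, mul_pow, norm_eq_abs, sq_abs]
  have hlam_sq : (lam ^ p) ^ 2 = lam ^ ((n : ℝ) - 2) := by
    rw [← rpow_natCast, ← rpow_mul hlam.le]
    congr 1
    push_cast
    ring
  have hw_sq : ((lam ^ 2 + ‖x - x₀‖ ^ 2) ^ (-p - 1)) ^ 2 =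
      (lam ^ 2 + ‖x - x₀‖ ^ 2) ^ (-(n : ℝ)) := by
    rw [← rpow_natCast, ← rpow_mul hw.le]
    congr 1
    push_cast
    ring
  rw [mul_pow, mul_pow, mul_pow, mul_pow, hlam_sq, hw_sq]
  ring

variable [FiniteDimensional ℝ E] [MeasurableSpace E] [BorelSpace E]

theorem integral_abs_talentiBubble_rpow (hE : finrank ℝ E = n) (hn : 2 < n)
    (hlam : 0 < lam) :
    ∫ x, |talentiBubble n c lam x₀ x| ^ (2 * (n : ℝ) / ((n : ℝ) - 2)) =
      |c| ^ (2 * (n : ℝ) / ((n : ℝ) - 2)) *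
        (π ^ ((n : ℝ) / 2) * Gamma ((n : ℝ) / 2) / Gamma n) := by
  have hn' : (2 : ℝ) < n := by exact_mod_cast hn
  have : Nontrivial E := Module.nontrivial_of_finrank_pos (R := ℝ) (by omega)
  have hprofile := integral_norm_pow_mul_add_norm_sq_rpow_neg (E := E) 0 (b := n)
    (pow_pos hlam 2) (by rw [hE]; push_cast; linarith)
  simp only [pow_zero, one_mul, CharP.cast_eq_zero, add_zero, hE] at hprofile
  simp_rw [abs_talentiBubble_rpow x₀ hn hlam]
  rw [integral_const_mul,
    integral_sub_right_eq_self (fun x : E => (lam ^ 2 + ‖x‖ ^ 2) ^ (-(n : ℝ))) x₀, hprofile,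
    ← rpow_natCast_mul hlam.le, show (n : ℝ) - n / 2 = n / 2 by ring,
    show (2 : ℕ) * ((n : ℝ) / 2 - n) = -n by push_cast; ring, rpow_neg hlam.le]
  have hG : Gamma ((n : ℝ) / 2) ≠ 0 := (Gamma_pos_of_pos (by positivity)).ne'
  have hlam_n : lam ^ (n : ℝ) ≠ 0 := (rpow_pos_of_pos hlam _).ne'
  field_simp

theorem integral_norm_gradient_talentiBubble_sq (hE : finrank ℝ E = n) (hn : 2 < n)
    (hlam : 0 < lam) :
    ∫ x, ‖gradient (talentiBubble n c lam x₀) x‖ ^ 2 =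
      c ^ 2 * n * ((n : ℝ) - 2) * (π ^ ((n : ℝ) / 2) * Gamma ((n : ℝ) / 2) / Gamma n) := by
  have hn' : (2 : ℝ) < n := by exact_mod_cast hn
  have : Nontrivial E := Module.nontrivial_of_finrank_pos (R := ℝ) (by omega)
  have hprofile := integral_norm_pow_mul_add_norm_sq_rpow_neg (E := E) 2 (b := n)
    (pow_pos hlam 2) (by rw [hE]; push_cast; linarith)
  simp only [hE] at hprofile
  simp_rw [norm_gradient_talentiBubble_sq x₀ hlam]
  rw [integral_const_mul, integral_sub_right_eq_self
    (fun x : E => ‖x‖ ^ 2 * (lam ^ 2 + ‖x‖ ^ 2) ^ (-(n : ℝ))) x₀, hprofile,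
    ← rpow_natCast_mul hlam.le]
  have hG : Gamma ((n : ℝ) / 2) ≠ 0 := (Gamma_pos_of_pos (by positivity)).ne'
  have hG_pred : Gamma ((n : ℝ) / 2 - 1) = Gamma ((n : ℝ) / 2) / (n / 2 - 1) := by
    rw [eq_div_iff (by linarith), mul_comm, ← Gamma_add_one (by linarith), sub_add_cancel]
  have hlam_n : lam ^ ((n : ℝ) - 2) ≠ 0 := (rpow_pos_of_pos hlam _).ne'
  rw [show (2 : ℕ) * (((n : ℝ) + (2 : ℕ)) / 2 - n) = -(n - 2) by push_cast; ring,
    show ((n : ℝ) + (2 : ℕ)) / 2 = n / 2 + 1 by push_cast; ring,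
    show (n : ℝ) - (n / 2 + 1) = n / 2 - 1 by ring, rpow_neg hlam.le,
    Gamma_add_one (by positivity), hG_pred]
  field_simp

end Bubble

theorem sobolevS_eq {n : ℕ} (hn : n ≠ 0) :
    sobolevS n =
      (π ^ ((n : ℝ) / 2) * Gamma ((n : ℝ) / 2) / Gamma n) ^ (-(2 / (n : ℝ))) /
        (n * (n - 2)) := by
  have hn' : (n : ℝ) ≠ 0 := by exact_mod_cast hn
  have hG : 0 < Gamma ((n : ℝ) / 2) / Gamma n :=
    div_pos (Gamma_pos_of_pos (by positivity)) (Gamma_pos_of_pos (by positivity))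
  rw [sobolevS, mul_div_assoc, mul_rpow (by positivity) hG.le, ← rpow_mul pi_pos.le,
    show (n : ℝ) / 2 * -(2 / n) = -1 by field_simp, rpow_neg_one, rpow_neg hG.le,
    ← inv_rpow hG.le, inv_div]
  field_simp

theorem aubin_talenti_extremal_general (n : ℕ) (hn : 3 ≤ n) (c lam : ℝ)
    (hlam : 0 < lam) (x₀ : EuclideanSpace ℝ (Fin n))
    (v : EuclideanSpace ℝ (Fin n) → ℝ)
    (hv : v = fun x => c * (lam / (lam ^ 2 + ‖x - x₀‖ ^ 2)) ^ (((n : ℝ) - 2) / 2)) :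
    (∫ x, |v x| ^ (2 * (n : ℝ) / ((n : ℝ) - 2))) ^ (((n : ℝ) - 2) / n) =
      sobolevS n * ∫ x, ‖gradient v x‖ ^ 2 := by
  have hn2 : (n : ℝ) - 2 ≠ 0 := by
    have : (3 : ℝ) ≤ n := by exact_mod_cast hn
    linarith
  obtain rfl : v = talentiBubble n c lam x₀ := hv
  rw [integral_abs_talentiBubble_rpow x₀ finrank_euclideanSpace_fin hn hlam,
    integral_norm_gradient_talentiBubble_sq x₀ finrank_euclideanSpace_fin hn hlam,
    sobolevS_eq (by omega)]
  set X := π ^ ((n : ℝ) / 2) * Gamma ((n : ℝ) / 2) / Gamma n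
  have hX : 0 < X := by positivity
  rw [mul_rpow (by positivity) hX.le, ← rpow_mul (abs_nonneg c),
    show 2 * (n : ℝ) / (n - 2) * ((n - 2) / n) = 2 by field_simp, rpow_two, sq_abs,
    show ((n : ℝ) - 2) / n = -(2 / n) + 1 by field_simp; ring, rpow_add hX, rpow_one]
  field_simp

/-- the Aubin–Talenti functions
`v(x) = c (λ/(λ² + |x − x₀|²))^{(n−2)/2}` attain equality in the sharp Sobolev
inequality `(∫ |v|^{2*})^{2/2*} = S ∫ |∇v|²`. -/
theorem aubin_talenti_extremal (n : ℕ) (hn : 3 ≤ n) (c lam : ℝ) (hc : c ≠ 0)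
    (hlam : 0 < lam) (x₀ : EuclideanSpace ℝ (Fin n))
    (v : EuclideanSpace ℝ (Fin n) → ℝ)
    (hv : v = fun x => c * (lam / (lam ^ 2 + ‖x - x₀‖ ^ 2)) ^ (((n : ℝ) - 2) / 2)) :
    (∫ x, |v x| ^ (2 * (n : ℝ) / ((n : ℝ) - 2))) ^ (((n : ℝ) - 2) / n) =
      sobolevS n * ∫ x, ‖gradient v x‖ ^ 2 :=
  aubin_talenti_extremal_general n hn c lam hlam x₀ v hv
end

section
/- Let n ≥ 3 be an integer and δ > 0. There exists a constant C > 0 depending only on n and δ such that for every λ ∈ (0, min(1, δ/2)] and every ξ ∈ ∂ℝⁿ₊ with |ξ| ≤ λ: ∫_{ℝⁿ₊ \ B_δ⁺} U_{ξ,λ}(z)^{2*} dz ≤ C λⁿ and ∫_{B_δ⁺} U_{ξ,λ}(z)^{2*} |z| dz ≤ C λ. -/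
/-!
At the critical exponent the bubble becomes the density `λⁿ / (λ² + c|z - ξ|²)ⁿ`.
Outside `B_δ` one has `|z - ξ| ≥ |z|/2` (as `|ξ| ≤ λ ≤ δ/2`), so there the density is
at most `λⁿ` times a fixed multiple of `(1 + c|z|²)⁻ⁿ`, which is integrable.
For the weighted integral, `|z| ≤ |z - ξ| + λ`, and the substitution `z - ξ = λw` turns
`∫ λⁿ (λ² + c|w|²)⁻ⁿ (|w| + λ)` into `λ ∫ (1 + c|w|²)⁻ⁿ (|w| + 1)`,
which is finite because `n + 1 < 2n`.
-/

open MeasureTheory Real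

/-- The constant `c(n) = 1/(2^{2/n}(n−2) n S)`. -/
noncomputable def bubbleC (n : ℕ) : ℝ :=
  1 / (2 ^ ((2 : ℝ) / n) * ((n : ℝ) - 2) * n * sobolevS n)

/-- The bubble `U_{x₀,λ}(x) = (λ/(λ² + c(n)|x−x₀|²))^{(n−2)/2}`. -/
noncomputable def bubble (n : ℕ) (x₀ : EuclideanSpace ℝ (Fin n)) (lam : ℝ)
    (x : EuclideanSpace ℝ (Fin n)) : ℝ :=
  (lam / (lam ^ 2 + bubbleC n * ‖x - x₀‖ ^ 2)) ^ (((n : ℝ) - 2) / 2)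

/-- The last coordinate `xₙ` of a point of `ℝⁿ`. -/
noncomputable def xlast (n : ℕ) (x : EuclideanSpace ℝ (Fin n)) : ℝ :=
  if h : n = 0 then 0 else x ⟨n - 1, by omega⟩

/-- The open upper half-space `ℝⁿ₊ = {x : xₙ > 0}`. -/
def upperHalf (n : ℕ) : Set (EuclideanSpace ℝ (Fin n)) := {x | 0 < xlast n x}

section BubbleDensity

variable {E : Type*} [NormedAddCommGroup E]

noncomputable def bubbleDensity (N : ℕ) (c lam : ℝ) (x : E) : ℝ :=
  lam ^ N / (lam ^ 2 + c * ‖x‖ ^ 2) ^ N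

lemma bubbleDensity_nonneg {N : ℕ} {c lam : ℝ} (hc : 0 ≤ c) (hlam : 0 ≤ lam) (x : E) :
    0 ≤ bubbleDensity N c lam x := by
  unfold bubbleDensity; positivity

lemma bubbleDensity_smul [NormedSpace ℝ E] (N : ℕ) (c : ℝ) {lam : ℝ} (hlam : 0 < lam)
    (x : E) :
    bubbleDensity N c lam (lam • x) = (lam ^ N)⁻¹ * bubbleDensity N c 1 x := by
  have hD : lam ^ 2 + c * ‖lam • x‖ ^ 2 = lam ^ 2 * (1 + c * ‖x‖ ^ 2) := by
    rw [norm_smul, Real.norm_of_nonneg hlam.le]; ring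
  rw [bubbleDensity, bubbleDensity, hD, one_pow, one_pow, mul_pow, ← pow_mul]
  field_simp
  ring

lemma one_add_mul_sq_le_of_le_norm {c lam δ : ℝ} (hc : 0 < c) (hlam : 0 < lam)
    (hlamδ : 2 * lam ≤ δ) {ξ z : E} (hξ : ‖ξ‖ ≤ lam) (hz : δ ≤ ‖z‖) :
    1 + c * ‖z‖ ^ 2 ≤ 4 * (δ⁻¹ ^ 2 + c) / c * (lam ^ 2 + c * ‖z - ξ‖ ^ 2) := by
  have hδ : 0 < δ := by linarith
  have hhalf : ‖z‖ / 2 ≤ ‖z - ξ‖ := by linarith [norm_sub_norm_le z ξ]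
  have hone : 1 ≤ δ⁻¹ ^ 2 * ‖z‖ ^ 2 := by
    rw [← mul_pow, one_le_sq_iff_one_le_abs, abs_of_nonneg (by positivity),
      inv_mul_eq_div, one_le_div hδ]
    exact hz
  have hsq : (‖z‖ / 2) ^ 2 ≤ ‖z - ξ‖ ^ 2 := pow_le_pow_left₀ (by positivity) hhalf 2
  calc 1 + c * ‖z‖ ^ 2 ≤ (δ⁻¹ ^ 2 + c) * ‖z‖ ^ 2 := by linarith
    _ = 4 * (δ⁻¹ ^ 2 + c) / c * (c * (‖z‖ / 2) ^ 2) := by field_simp; ring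
    _ ≤ 4 * (δ⁻¹ ^ 2 + c) / c * (lam ^ 2 + c * ‖z - ξ‖ ^ 2) := by
        gcongr
        nlinarith [sq_nonneg lam]

lemma bubbleDensity_sub_le_of_le_norm (N : ℕ) {c lam δ : ℝ} (hc : 0 < c) (hlam : 0 < lam)
    (hlamδ : 2 * lam ≤ δ) {ξ z : E} (hξ : ‖ξ‖ ≤ lam) (hz : δ ≤ ‖z‖) :
    bubbleDensity N c lam (z - ξ) ≤
      (4 * (δ⁻¹ ^ 2 + c) / c) ^ N * lam ^ N * bubbleDensity N c 1 z := by
  set κ := 4 * (δ⁻¹ ^ 2 + c) / c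
  have key : (1 + c * ‖z‖ ^ 2) ^ N ≤ κ ^ N * (lam ^ 2 + c * ‖z - ξ‖ ^ 2) ^ N := by
    rw [← mul_pow]
    exact pow_le_pow_left₀ (by positivity) (one_add_mul_sq_le_of_le_norm hc hlam hlamδ hξ hz) N
  unfold bubbleDensity
  calc lam ^ N / (lam ^ 2 + c * ‖z - ξ‖ ^ 2) ^ N
      = κ ^ N * lam ^ N / (κ ^ N * (lam ^ 2 + c * ‖z - ξ‖ ^ 2) ^ N) := by
        rw [mul_div_mul_left _ _ (by positivity)]
    _ ≤ κ ^ N * lam ^ N / (1 + c * ‖z‖ ^ 2) ^ N :=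
        div_le_div_of_nonneg_left (by positivity) (by positivity) key
    _ = κ ^ N * lam ^ N * (1 ^ N / (1 ^ 2 + c * ‖z‖ ^ 2) ^ N) := by simp only [one_pow]; ring

end BubbleDensity

section Integrals

open Module

variable {E : Type*} [NormedAddCommGroup E] [NormedSpace ℝ E] [FiniteDimensional ℝ E]
  [MeasurableSpace E] [BorelSpace E] (μ : Measure E) [μ.IsAddHaarMeasure]

lemma integrable_bubbleDensity_one_mul_norm_add_one {N : ℕ} {c : ℝ} (hc : 0 < c)
    (hN : finrank ℝ E + 1 < 2 * N) :
    Integrable (fun x : E ↦ bubbleDensity N c 1 x * (‖x‖ + 1)) μ := by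
  set m := min 1 c
  have hm : 0 < m := lt_min one_pos hc
  have hr : (finrank ℝ E : ℝ) < ((2 * N - 1 : ℕ) : ℝ) := by exact_mod_cast (by omega)
  refine ((integrable_one_add_norm hr).const_mul ((2 / m) ^ N)).mono'
    (by unfold bubbleDensity; fun_prop) (ae_of_all _ fun x ↦ ?_)
  set y := 1 + ‖x‖
  have hy : 0 < y := by positivity
  have hlower : m / 2 * y ^ 2 ≤ 1 + c * ‖x‖ ^ 2 := by
    have h1 : m ≤ 1 := min_le_left _ _
    have h2 : m * ‖x‖ ^ 2 ≤ c * ‖x‖ ^ 2 := by gcongr; exact min_le_right _ _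
    nlinarith [sq_nonneg (1 - ‖x‖), norm_nonneg x]
  have hpow : y ^ (2 * N) = y ^ (2 * N - 1) * y := by rw [← pow_succ]; congr 1; omega
  rw [Real.norm_of_nonneg (by unfold bubbleDensity; positivity), Real.rpow_neg hy.le,
    Real.rpow_natCast, bubbleDensity, one_pow, one_pow, add_comm ‖x‖]
  calc 1 / (1 + c * ‖x‖ ^ 2) ^ N * y ≤ 1 / (m / 2 * y ^ 2) ^ N * y := by gcongr
    _ = (2 / m) ^ N * (y ^ (2 * N - 1))⁻¹ := by
        rw [mul_pow, ← pow_mul, hpow]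
        field_simp
        rw [← mul_pow, div_mul_div_cancel₀ two_ne_zero, div_self hm.ne', one_pow]

lemma integral_bubbleDensity_mul_norm_add {N : ℕ} (hd : finrank ℝ E = N) (c : ℝ) {lam : ℝ}
    (hlam : 0 < lam) :
    ∫ x, bubbleDensity N c lam x * (‖x‖ + lam) ∂μ =
      lam * ∫ x, bubbleDensity N c 1 x * (‖x‖ + 1) ∂μ := by
  have hscale := μ.integral_comp_smul_of_nonneg
    (fun x ↦ bubbleDensity N c lam x * (‖x‖ + lam)) lam (hR := hlam.le)
  have hN : lam ^ N ≠ 0 := pow_ne_zero _ hlam.ne'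
  simp only [bubbleDensity_smul N c hlam, norm_smul, Real.norm_of_nonneg hlam.le, hd,
    smul_eq_mul] at hscale
  have hfactor : ∫ x, (lam ^ N)⁻¹ * bubbleDensity N c 1 x * (lam * ‖x‖ + lam) ∂μ =
      (lam ^ N)⁻¹ * (lam * ∫ x, bubbleDensity N c 1 x * (‖x‖ + 1) ∂μ) := by
    rw [← integral_const_mul, ← integral_const_mul]
    congr 1 with x
    ring
  exact mul_left_cancel₀ (inv_ne_zero hN) (hscale.symm.trans hfactor)

lemma setIntegral_bubbleDensity_sub_mul_norm_le {N : ℕ} (hd : finrank ℝ E = N) (hN : 2 ≤ N)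
    {c lam : ℝ} (hc : 0 < c) (hlam : 0 < lam) {ξ : E} (hξ : ‖ξ‖ ≤ lam) (s : Set E) :
    ∫ z in s, bubbleDensity N c lam (z - ξ) * ‖z‖ ∂μ ≤
      lam * ∫ x, bubbleDensity N c 1 x * (‖x‖ + 1) ∂μ := by
  set g : E → ℝ := fun x ↦ bubbleDensity N c lam x * (‖x‖ + lam)
  have hg_nonneg : ∀ x, 0 ≤ g x := fun x ↦
    mul_nonneg (bubbleDensity_nonneg hc.le hlam.le x) (by positivity)
  have hg : Integrable g μ := by
    refine (integrable_comp_smul_iff μ g hlam.ne').1 ?_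
    have h1 := (integrable_bubbleDensity_one_mul_norm_add_one μ hc (N := N)
      (by omega)).const_mul ((lam ^ N)⁻¹ * lam)
    refine h1.congr (ae_of_all _ fun x ↦ ?_)
    simp only [g, bubbleDensity_smul N c hlam, norm_smul, Real.norm_of_nonneg hlam.le]
    ring
  have hgξ := hg.comp_sub_right ξ
  have hle : ∀ z, bubbleDensity N c lam (z - ξ) * ‖z‖ ≤ g (z - ξ) := fun z ↦ by
    have : ‖z‖ ≤ ‖z - ξ‖ + lam := by linarith [norm_le_norm_sub_add z ξ]
    exact mul_le_mul_of_nonneg_left this (bubbleDensity_nonneg hc.le hlam.le _)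
  calc ∫ z in s, bubbleDensity N c lam (z - ξ) * ‖z‖ ∂μ
        ≤ ∫ z in s, g (z - ξ) ∂μ :=
        integral_mono_of_nonneg (ae_of_all _ fun z ↦
          mul_nonneg (bubbleDensity_nonneg hc.le hlam.le _) (norm_nonneg z))
          hgξ.integrableOn (ae_of_all _ hle)
    _ ≤ ∫ z, g (z - ξ) ∂μ :=
        setIntegral_le_integral hgξ (ae_of_all _ fun z ↦ hg_nonneg _)
    _ = ∫ x, g x ∂μ := integral_sub_right_eq_self g ξ
    _ = _ := integral_bubbleDensity_mul_norm_add μ hd c hlam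

lemma setIntegral_bubbleDensity_sub_le_of_subset_compl_ball {N : ℕ}
    (hN : finrank ℝ E + 1 < 2 * N) {c lam δ : ℝ} (hc : 0 < c) (hlam : 0 < lam)
    (hlamδ : 2 * lam ≤ δ) {ξ : E} (hξ : ‖ξ‖ ≤ lam) {s : Set E} (hs : MeasurableSet s)
    (hsδ : s ⊆ (Metric.ball 0 δ)ᶜ) :
    ∫ z in s, bubbleDensity N c lam (z - ξ) ∂μ ≤
      (4 * (δ⁻¹ ^ 2 + c) / c) ^ N * lam ^ N *
        ∫ x, bubbleDensity N c 1 x * (‖x‖ + 1) ∂μ := by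
  set K := (4 * (δ⁻¹ ^ 2 + c) / c) ^ N * lam ^ N
  set g : E → ℝ := fun x ↦ K * (bubbleDensity N c 1 x * (‖x‖ + 1))
  have hg : Integrable g μ :=
    (integrable_bubbleDensity_one_mul_norm_add_one μ hc hN).const_mul K
  have hg_nonneg : ∀ x, 0 ≤ g x := fun x ↦
    mul_nonneg (by positivity) (mul_nonneg (bubbleDensity_nonneg hc.le zero_le_one x)
      (by positivity))
  have hle : ∀ z ∈ s, bubbleDensity N c lam (z - ξ) ≤ g z := fun z hz ↦ by
    have hz : δ ≤ ‖z‖ := by simpa using hsδ hz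
    refine (bubbleDensity_sub_le_of_le_norm N hc hlam hlamδ hξ hz).trans ?_
    have := bubbleDensity_nonneg (N := N) hc.le zero_le_one z
    exact mul_le_mul_of_nonneg_left (by nlinarith [norm_nonneg z]) (by positivity)
  calc ∫ z in s, bubbleDensity N c lam (z - ξ) ∂μ ≤ ∫ z in s, g z ∂μ :=
        integral_mono_of_nonneg (ae_of_all _ fun z ↦ bubbleDensity_nonneg hc.le hlam.le _)
          hg.integrableOn ((ae_restrict_iff' hs).2 (ae_of_all _ hle))
    _ ≤ ∫ z, g z ∂μ := setIntegral_le_integral hg (ae_of_all _ hg_nonneg)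
    _ = _ := integral_const_mul K _

end Integrals

lemma sobolevS_pos {n : ℕ} (hn : 3 ≤ n) : 0 < sobolevS n := by
  have h2 : (2 : ℝ) < n := by exact_mod_cast hn
  have hg1 : 0 < Real.Gamma n := Real.Gamma_pos_of_pos (by linarith)
  have hg2 : 0 < Real.Gamma ((n : ℝ) / 2) := Real.Gamma_pos_of_pos (by linarith)
  have hπ : 0 < π * n * ((n : ℝ) - 2) := mul_pos (mul_pos pi_pos (by linarith)) (by linarith)
  exact mul_pos (inv_pos.2 hπ) (Real.rpow_pos_of_pos (div_pos hg1 hg2) _)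

lemma bubbleC_pos {n : ℕ} (hn : 3 ≤ n) : 0 < bubbleC n := by
  have h2 : (2 : ℝ) < n := by exact_mod_cast hn
  have := sobolevS_pos hn
  unfold bubbleC
  exact one_div_pos.2
    (mul_pos (mul_pos (mul_pos (by positivity) (by linarith)) (by linarith)) this)

lemma bubble_rpow_eq_bubbleDensity {n : ℕ} (hn : 3 ≤ n) (ξ : EuclideanSpace ℝ (Fin n))
    {lam : ℝ} (hlam : 0 ≤ lam) (z : EuclideanSpace ℝ (Fin n)) :
    bubble n ξ lam z ^ (2 * (n : ℝ) / ((n : ℝ) - 2)) =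
      bubbleDensity n (bubbleC n) lam (z - ξ) := by
  have h2 : (2 : ℝ) < n := by exact_mod_cast hn
  have hexp : ((n : ℝ) - 2) / 2 * (2 * (n : ℝ) / ((n : ℝ) - 2)) = n := by
    field_simp [(by linarith : (n : ℝ) - 2 ≠ 0)]
  have hbase : 0 ≤ lam / (lam ^ 2 + bubbleC n * ‖z - ξ‖ ^ 2) := by
    have := bubbleC_pos hn
    positivity
  rw [bubble, ← Real.rpow_mul hbase, hexp, Real.rpow_natCast, div_pow, bubbleDensity]

lemma measurableSet_upperHalf (n : ℕ) : MeasurableSet (upperHalf n) := by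
  refine measurableSet_lt measurable_const ?_
  unfold xlast
  split_ifs <;> fun_prop

theorem mass_estimates_general (n : ℕ) (hn : 3 ≤ n) (δ : ℝ) :
    ∃ C > (0 : ℝ), ∀ lam : ℝ, 0 < lam → lam ≤ min 1 (δ / 2) →
      ∀ ξ : EuclideanSpace ℝ (Fin n), xlast n ξ = 0 → ‖ξ‖ ≤ lam →
      (∫ z in upperHalf n \ Metric.ball 0 δ,
          bubble n ξ lam z ^ (2 * (n : ℝ) / ((n : ℝ) - 2))) ≤ C * lam ^ (n : ℝ) ∧
        (∫ z in Metric.ball 0 δ ∩ upperHalf n,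
          bubble n ξ lam z ^ (2 * (n : ℝ) / ((n : ℝ) - 2)) * ‖z‖) ≤ C * lam := by
  have hd : Module.finrank ℝ (EuclideanSpace ℝ (Fin n)) = n := finrank_euclideanSpace_fin
  have hc := bubbleC_pos hn
  set B := ∫ x : EuclideanSpace ℝ (Fin n), bubbleDensity n (bubbleC n) 1 x * (‖x‖ + 1)
  have hB : 0 ≤ B := integral_nonneg fun x ↦
    mul_nonneg (bubbleDensity_nonneg hc.le zero_le_one x) (by positivity)
  set K := (4 * (δ⁻¹ ^ 2 + bubbleC n) / bubbleC n) ^ n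
  have hK : 0 < K := by positivity
  refine ⟨(K + 1) * B + 1, by positivity, fun lam hlam hlam_le ξ _ hξ ↦ ?_⟩
  have hlamδ : 2 * lam ≤ δ := by linarith [hlam_le.trans (min_le_right _ _)]
  have hlamn : 0 < lam ^ n := pow_pos hlam n
  simp only [bubble_rpow_eq_bubbleDensity hn ξ hlam.le, Real.rpow_natCast]
  constructor
  · calc _ ≤ K * lam ^ n * B := setIntegral_bubbleDensity_sub_le_of_subset_compl_ball volume
          (by omega) hc hlam hlamδ hξ ((measurableSet_upperHalf n).diff measurableSet_ball)
          (fun z hz ↦ hz.2)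
      _ ≤ ((K + 1) * B + 1) * lam ^ n := by nlinarith [mul_nonneg hK.le hB]
  · calc _ ≤ lam * B :=
          setIntegral_bubbleDensity_sub_mul_norm_le volume hd (by omega) hc hlam hξ _
      _ ≤ ((K + 1) * B + 1) * lam := by nlinarith [mul_nonneg hK.le hB]

/-- for `λ ∈ (0, min(1, δ/2)]` and boundary points `ξ` with
`|ξ| ≤ λ`, the `2*`-mass of `U_{ξ,λ}` outside `B_δ⁺` is `O(λⁿ)` and the
`|z|`-weighted `2*`-mass in `B_δ⁺` is `O(λ)`. -/
theorem mass_estimates (n : ℕ) (hn : 3 ≤ n) (δ : ℝ) (hδ : 0 < δ) :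
    ∃ C > (0 : ℝ), ∀ lam : ℝ, 0 < lam → lam ≤ min 1 (δ / 2) →
      ∀ ξ : EuclideanSpace ℝ (Fin n), xlast n ξ = 0 → ‖ξ‖ ≤ lam →
      (∫ z in upperHalf n \ Metric.ball 0 δ,
          bubble n ξ lam z ^ (2 * (n : ℝ) / ((n : ℝ) - 2))) ≤ C * lam ^ (n : ℝ) ∧
        (∫ z in Metric.ball 0 δ ∩ upperHalf n,
          bubble n ξ lam z ^ (2 * (n : ℝ) / ((n : ℝ) - 2)) * ‖z‖) ≤ C * lam :=
  mass_estimates_general n hn δ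
end
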